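/- arXiv:2501.19362 — 6 statements merged into one kernel-verified Lean document; each statement's English description precedes it below -/
import Mathlib

section
/- Let E ∈ ℝ and Z : [0,∞) → (0,∞) satisfy: (i) for every b ∈ (0,1) there exists T_b > 0 such that e^{T E} Z(T) ≥ b^T for all T ≥ T_b, and (ii) there exists ρ̃ > 0 such that Z(2T) ≤ (1/min(1,ρ̃)) Z(T)² for all T ≥ 0. Then for every T₀ > 0 we have e^{T₀ E} Z(T₀) ≥ min(1,ρ̃); in particular lim inf_{T→∞} e^{TE}Z(T) ≥ min(1,ρ̃) > 0. -/
open Real Filter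

/-
Put W(T) = e^{TE} Z(T) and c = min(1, ρ̃). The doubling inequality survives the exponential
weight, W(2T) ≤ c⁻¹ W(T)², so along T_k = 2^k T₀ it iterates to W(T_k) ≤ c q^{2^k} = c r^{T_k}
with q = W(T₀)/c and r = q^{1/T₀}. If W(T₀) < c then r < 1, and for any b ∈ (r, 1) the lower
bound b^{T_k} ≤ W(T_k) ≤ c r^{T_k} contradicts (b/r)^{T_k} → ∞.
-/

theorem le_pow_two_pow_of_le_sq {R : Type*} [Semiring R] [PartialOrder R] [IsOrderedRing R]
    {u : ℕ → R} (hu₀ : ∀ k, 0 ≤ u k) (hu : ∀ k, u (k + 1) ≤ u k ^ 2) (k : ℕ) :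
    u k ≤ u 0 ^ 2 ^ k := by
  induction k with
  | zero => simp
  | succ k ih =>
    calc u (k + 1) ≤ u k ^ 2 := hu k
      _ ≤ (u 0 ^ 2 ^ k) ^ 2 := pow_le_pow_left₀ (hu₀ k) ih 2
      _ = u 0 ^ 2 ^ (k + 1) := by rw [← pow_mul, pow_succ]

theorem le_mul_div_pow_two_pow_of_doubling {W : ℝ → ℝ} {c T₀ : ℝ} (hc : 0 < c) (hT₀ : 0 ≤ T₀)
    (hW : ∀ T, 0 ≤ T → 0 ≤ W T) (hdoub : ∀ T, 0 ≤ T → W (2 * T) ≤ c⁻¹ * W T ^ 2) (k : ℕ) :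
    W (2 ^ k * T₀) ≤ c * (W T₀ / c) ^ 2 ^ k := by
  have hseq := le_pow_two_pow_of_le_sq (u := fun k ↦ W (2 ^ k * T₀) / c)
    (fun k ↦ div_nonneg (hW _ (by positivity)) hc.le)
    (fun k ↦ calc
      W (2 ^ (k + 1) * T₀) / c = W (2 * (2 ^ k * T₀)) / c := by ring_nf
      _ ≤ c⁻¹ * W (2 ^ k * T₀) ^ 2 / c := by gcongr; exact hdoub _ (by positivity)
      _ = (W (2 ^ k * T₀) / c) ^ 2 := by ring) k
  simp only [pow_zero, one_mul] at hseq
  rwa [div_le_iff₀' hc] at hseq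

theorem exp_mul_mul_le_inv_mul_sq {Z : ℝ → ℝ} {c E T : ℝ} (h : Z (2 * T) ≤ c⁻¹ * Z T ^ 2) :
    exp (2 * T * E) * Z (2 * T) ≤ c⁻¹ * (exp (T * E) * Z T) ^ 2 := by
  have hexp : exp (2 * T * E) = exp (T * E) ^ 2 := by rw [← exp_nat_mul]; ring_nf
  calc exp (2 * T * E) * Z (2 * T) ≤ exp (2 * T * E) * (c⁻¹ * Z T ^ 2) := by gcongr
    _ = c⁻¹ * (exp (T * E) * Z T) ^ 2 := by rw [hexp]; ring

theorem not_frequently_le_mul_rpow {W : ℝ → ℝ} {c r : ℝ} (hr₀ : 0 < r) (hr₁ : r < 1)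
    (hlow : ∀ b ∈ Set.Ioo (0 : ℝ) 1, ∀ᶠ T in atTop, b ^ T ≤ W T) :
    ¬ ∃ᶠ T in atTop, W T ≤ c * r ^ T := by
  intro hfreq
  obtain ⟨b, hrb, hb₁⟩ := exists_between hr₁
  have hb : b ∈ Set.Ioo (0 : ℝ) 1 := ⟨hr₀.trans hrb, hb₁⟩
  have hbig : ∀ᶠ T : ℝ in atTop, c < (b / r) ^ T :=
    (tendsto_rpow_atTop_of_base_gt_one _ ((one_lt_div hr₀).mpr hrb)).eventually_gt_atTop c
  obtain ⟨T, hWT, hT, hbT⟩ := (hfreq.and_eventually (hbig.and (hlow b hb))).exists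
  rw [div_rpow hb.1.le hr₀.le, lt_div_iff₀ (rpow_pos_of_pos hr₀ T)] at hT
  linarith

theorem doubling_iteration_lower_bound
    (E : ℝ) (Z : ℝ → ℝ) (ρ : ℝ) (hρ : 0 < ρ)
    (hZpos : ∀ T : ℝ, 0 ≤ T → 0 < Z T)
    (hlow : ∀ b : ℝ, b ∈ Set.Ioo (0 : ℝ) 1 →
      ∃ Tb : ℝ, 0 < Tb ∧ ∀ T : ℝ, Tb ≤ T → b ^ T ≤ Real.exp (T * E) * Z T)
    (hdoub : ∀ T : ℝ, 0 ≤ T → Z (2 * T) ≤ (min 1 ρ)⁻¹ * (Z T) ^ 2) :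
    ∀ T₀ : ℝ, 0 < T₀ → min 1 ρ ≤ Real.exp (T₀ * E) * Z T₀ := by
  intro T₀ hT₀
  set c := min 1 ρ
  have hc : 0 < c := lt_min one_pos hρ
  set W : ℝ → ℝ := fun T ↦ exp (T * E) * Z T
  have hWpos : ∀ T, 0 ≤ T → 0 < W T := fun T hT ↦ mul_pos (exp_pos _) (hZpos T hT)
  by_contra! hlt
  set q := W T₀ / c
  have hq : 0 < q := div_pos (hWpos T₀ hT₀.le) hc
  set r := q ^ T₀⁻¹
  have hr₀ : 0 < r := rpow_pos_of_pos hq _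
  have hr₁ : r < 1 := rpow_lt_one hq.le ((div_lt_one hc).mpr hlt) (inv_pos.mpr hT₀)
  have hiter (k : ℕ) : W (2 ^ k * T₀) ≤ c * r ^ (2 ^ k * T₀) := by
    have hrq : r ^ (2 ^ k * T₀) = q ^ 2 ^ k := by
      rw [mul_comm, rpow_mul hr₀.le, ← rpow_mul hq.le, inv_mul_cancel₀ hT₀.ne', rpow_one,
        ← Nat.cast_ofNat, ← Nat.cast_pow, rpow_natCast]
    rw [hrq]
    exact le_mul_div_pow_two_pow_of_doubling hc hT₀.le (fun T hT ↦ (hWpos T hT).le)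
      (fun T hT ↦ exp_mul_mul_le_inv_mul_sq (hdoub T hT)) k
  refine not_frequently_le_mul_rpow (W := W) (c := c) hr₀ hr₁ (fun b hb ↦ ?_) ?_
  · obtain ⟨Tb, -, hTb⟩ := hlow b hb
    exact eventually_atTop.2 ⟨Tb, hTb⟩
  · exact ((tendsto_pow_atTop_atTop_of_one_lt one_lt_two).atTop_mul_const hT₀).frequently
      (Frequently.of_forall hiter)
end

section
/- Let K ⊆ ℝ^d be compact and let μ = ∑_{i=1}^n δ_{x_i}, ν = ∑_{j=1}^m δ_{y_j} be finite sums of Dirac measures on K. Suppose the Prohorov distance d(μ,ν) < ε where ε < 1 and ε < (1/2) min{|x−y| : x,y ∈ supp(μ), x ≠ y}. Then n = m and there is a permutation σ of {1,…,n} with max_i |x_i − y_{σ(i)}| < ε. -/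
/-!
For atomic measures the Lévy–Prokhorov inequalities are counting inequalities, and since `ε < 1`
their additive slack `ε` is lost when rounding: `#{i | x i ∈ A} ≤ #{j | y j ∈ A_ε}` and
symmetrically. Taking `A = {y j}`, every `y j` is `ε`-close to an atom of `μ`, which is unique by
the separation. Taking `A = {x i}` and `A = ball (x i) ε`, whose `ε`-thickening contains no other
atom of `μ`, the multiplicity of `x i` equals the number of `y j` in `ball (x i) ε`. Matching
the fibres of `i ↦ x i` and `j ↦ (the atom near y j)` then gives `σ`.
-/

open MeasureTheory Metric Finset
open scoped ENNReal

lemma Nat.le_of_cast_le_add_of_lt_one {a b : ℕ} {c : ℝ≥0∞} (hc : c < 1)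
    (h : (a : ℝ≥0∞) ≤ b + c) : a ≤ b := by
  have : (a : ℝ≥0∞) < (b + 1 : ℕ) := by
    push_cast
    exact h.trans_lt (ENNReal.add_lt_add_left (by simp) hc)
  exact Nat.lt_succ_iff.mp (mod_cast this)

lemma Equiv.exists_comp_eq_of_card_fiber_eq {ι κ α : Type*} [Fintype ι] [Fintype κ]
    [DecidableEq α] {f : ι → α} {g : κ → α} (h : ∀ a, #{i | f i = a} = #{j | g j = a}) :
    ∃ σ : ι ≃ κ, ∀ i, g (σ i) = f i := by
  have e : ∀ a, {i // f i = a} ≃ {j // g j = a} := fun a =>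
    (Fintype.card_eq.mp (by simpa only [Fintype.card_subtype] using h a)).some
  exact ⟨Equiv.ofFiberEquiv e, Equiv.ofFiberEquiv_map e⟩

section
variable {X ι κ : Type*} [Fintype ι] [Fintype κ]

open Classical in
lemma MeasureTheory.Measure.sum_dirac_apply_eq_card [MeasurableSpace X] (x : ι → X) {A : Set X}
    (hA : MeasurableSet A) : (∑ i, Measure.dirac (x i)) A = #{i | x i ∈ A} := by
  simp [Measure.finsetSum_apply, Measure.dirac_apply' _ hA, Set.indicator_apply,
    Finset.sum_boole]

open Classical in
lemma exists_equiv_dist_lt_of_card_eq [PseudoMetricSpace X] (x : ι → X) (y : κ → X) {ε : ℝ}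
    (hsep : ∀ i i', x i ≠ x i' → 2 * ε ≤ dist (x i) (x i'))
    (hcover : ∀ j, ∃ i, dist (x i) (y j) < ε)
    (hcard : ∀ i, #{i' | x i' = x i} = #{j | dist (x i) (y j) < ε}) :
    ∃ σ : ι ≃ κ, ∀ i, dist (x i) (y (σ i)) < ε := by
  choose c hc using hcover
  have hcenter : ∀ i j, x (c j) = x i ↔ dist (x i) (y j) < ε := by
    refine fun i j => ⟨fun h => h ▸ hc j, fun h => ?_⟩
    by_contra hne
    have := (hsep _ _ hne).trans (dist_triangle_right _ _ (y j))
    linarith [hc j]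
  obtain ⟨σ, hσ⟩ := Equiv.exists_comp_eq_of_card_fiber_eq (f := x) (g := fun j => x (c j))
    fun a => by
      by_cases ha : ∃ i, x i = a
      · obtain ⟨i, rfl⟩ := ha
        simp only [hcard, hcenter]
      · push Not at ha
        simp [ha]
  exact ⟨σ, fun i => hσ i ▸ hc (σ i)⟩

variable [PseudoMetricSpace X] [MeasurableSpace X] [OpensMeasurableSpace X]
  {x : ι → X} {y : κ → X} {ε : ℝ}

open Classical in
lemma card_le_card_thickening_of_levyProkhorovDist_lt (hε : ε < 1)
    (h : levyProkhorovDist (∑ i, Measure.dirac (x i)) (∑ j, Measure.dirac (y j)) < ε)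
    {A : Set X} (hA : MeasurableSet A) : #{i | x i ∈ A} ≤ #{j | y j ∈ thickening ε A} := by
  have hε0 : 0 ≤ ε := ENNReal.toReal_nonneg.trans h.le
  have hE := (ENNReal.lt_ofReal_iff_toReal_lt (levyProkhorovEDist_ne_top _ _)).mpr h
  have hμν := left_measure_le_of_levyProkhorovEDist_lt hE hA
  rw [ENNReal.toReal_ofReal hε0, Measure.sum_dirac_apply_eq_card x hA,
    Measure.sum_dirac_apply_eq_card y isOpen_thickening.measurableSet] at hμν
  exact Nat.le_of_cast_le_add_of_lt_one (ENNReal.ofReal_lt_one.mpr hε) hμν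

variable [MeasurableSingletonClass X]

lemma exists_dist_lt_of_levyProkhorovDist_lt (hε : ε < 1)
    (h : levyProkhorovDist (∑ i, Measure.dirac (x i)) (∑ j, Measure.dirac (y j)) < ε)
    (j : κ) : ∃ i, dist (x i) (y j) < ε := by
  classical
  rw [levyProkhorovDist_comm] at h
  have hyx :=
    card_le_card_thickening_of_levyProkhorovDist_lt hε h (measurableSet_singleton (y j))
  obtain ⟨i, hi⟩ := Finset.card_pos.mp ((Finset.card_pos.mpr ⟨j, by simp⟩).trans_le hyx)
  exact ⟨i, by simpa [thickening_singleton] using hi⟩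

open Classical in
lemma card_fiber_eq_card_dist_lt_of_levyProkhorovDist_lt
    (hsep : ∀ i i', x i ≠ x i' → 2 * ε ≤ dist (x i) (x i')) (hε : ε < 1)
    (h : levyProkhorovDist (∑ i, Measure.dirac (x i)) (∑ j, Measure.dirac (y j)) < ε)
    (i : ι) :
    #{i' | x i' = x i} = #{j | dist (x i) (y j) < ε} := by
  refine le_antisymm ?_ ?_
  · simpa [thickening_singleton, dist_comm] using
      card_le_card_thickening_of_levyProkhorovDist_lt hε h (measurableSet_singleton (x i))
  · rw [levyProkhorovDist_comm] at h
    calc #{j | dist (x i) (y j) < ε} = #{j | y j ∈ ball (x i) ε} := by simp [dist_comm]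
      _ ≤ #{i' | x i' ∈ thickening ε (ball (x i) ε)} :=
        card_le_card_thickening_of_levyProkhorovDist_lt hε h measurableSet_ball
      _ ≤ #{i' | x i' = x i} := card_le_card fun i' hi' => by
        simp only [mem_filter, mem_univ, true_and] at hi' ⊢
        by_contra hne
        have := mem_ball.mp (thickening_ball _ _ _ hi')
        linarith [hsep _ _ hne]

end

theorem prokhorov_close_dirac_sums_matching_general
    {d : ℕ}
    {n m : ℕ} (x : Fin n → EuclideanSpace ℝ (Fin d)) (y : Fin m → EuclideanSpace ℝ (Fin d))
    (ε : ℝ) (hε1 : ε < 1)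
    (hεsep : ∀ i j, x i ≠ x j → 2 * ε < dist (x i) (x j))
    (hclose : levyProkhorovDist (∑ i, Measure.dirac (x i)) (∑ j, Measure.dirac (y j)) < ε) :
    n = m ∧ ∃ σ : Fin n ≃ Fin m, ∀ i, dist (x i) (y (σ i)) < ε := by
  have hsep : ∀ i j, x i ≠ x j → 2 * ε ≤ dist (x i) (x j) := fun i j h => (hεsep i j h).le
  obtain ⟨σ, hσ⟩ := exists_equiv_dist_lt_of_card_eq x y hsep
    (exists_dist_lt_of_levyProkhorovDist_lt hε1 hclose)
    (card_fiber_eq_card_dist_lt_of_levyProkhorovDist_lt hsep hε1 hclose)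
  exact ⟨by simpa using Fintype.card_congr σ, σ, hσ⟩

theorem prokhorov_close_dirac_sums_matching
    {d : ℕ} (K : Set (EuclideanSpace ℝ (Fin d))) (hK : IsCompact K)
    {n m : ℕ} (x : Fin n → EuclideanSpace ℝ (Fin d)) (y : Fin m → EuclideanSpace ℝ (Fin d))
    (hx : ∀ i, x i ∈ K) (hy : ∀ j, y j ∈ K)
    (ε : ℝ) (hε1 : ε < 1)
    (hεsep : ∀ i j, x i ≠ x j → 2 * ε < dist (x i) (x j))
    (hclose : levyProkhorovDist (∑ i, Measure.dirac (x i)) (∑ j, Measure.dirac (y j)) < ε) :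
    n = m ∧ ∃ σ : Fin n ≃ Fin m, ∀ i, dist (x i) (y (σ i)) < ε :=
  prokhorov_close_dirac_sums_matching_general x y ε hε1 hεsep hclose
end

section
/- Define φ : ℕ₀ → ℤ by φ(n) = n/2 if n is even and φ(n) = −(n+1)/2 if n is odd, extended to φ : [0,∞) → ℝ \ (−1,0) piecewise linearly with slope 1 on intervals [2n, 2n+1) and slope −1 on [2n+1, 2n+2). Then φ : ℕ₀ → ℤ is a bijection, and |φ(t) − φ(s)| ≥ |t − s|/4 for all s, t ≥ 0 with |⌊s⌋ − ⌊t⌋| ≠ 2. -/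
/-!
Even numbers go to `ℕ` and odd ones to the negative integers, which gives the bijection.
For the expansion, the difference `φ(t) - φ(s)` is, up to sign, `(t - s) - (⌊t⌋ - ⌊s⌋)/2`
when `⌊s⌋, ⌊t⌋` have the same parity, and `(t - ⌊t⌋/2) + (s - ⌊s⌋/2) + 1/2 ≥ (t + s)/2`
otherwise. In the first case either `⌊s⌋ = ⌊t⌋` and `φ` is an isometry there, or
`|⌊t⌋ - ⌊s⌋| ≥ 4`, so halving the integer part of the displacement still leaves a quarter of it.
-/

/-- The folding bijection `ℕ → ℤ`: `φ(n) = n/2` for even `n`, `φ(n) = -(n+1)/2` for odd `n`. -/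
def foldMapNat (n : ℕ) : ℤ := if Even n then (n : ℤ) / 2 else -(((n : ℤ) + 1) / 2)

/-- The piecewise linear extension of the folding bijection to `[0,∞)`:
slope `1` on intervals `[2n, 2n+1)` and slope `-1` on `[2n+1, 2n+2)`. -/
noncomputable def foldMapReal (t : ℝ) : ℝ :=
  if Even ⌊t⌋ then ((⌊t⌋ : ℝ) / 2) + (t - ⌊t⌋)
  else -(((⌊t⌋ : ℝ) + 1) / 2) - (t - ⌊t⌋)

lemma foldMapNat_two_mul (k : ℕ) : foldMapNat (2 * k) = k := by
  rw [foldMapNat, if_pos (even_two_mul k)]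
  omega

lemma foldMapNat_two_mul_add_one (k : ℕ) : foldMapNat (2 * k + 1) = -(k + 1) := by
  rw [foldMapNat, if_neg (Nat.not_even_iff_odd.mpr (odd_two_mul_add_one k))]
  omega

lemma foldMapNat_injective : Function.Injective foldMapNat := by
  intro a b h
  rcases Nat.even_or_odd' a with ⟨k, rfl | rfl⟩ <;>
    rcases Nat.even_or_odd' b with ⟨l, rfl | rfl⟩ <;>
    simp only [foldMapNat_two_mul, foldMapNat_two_mul_add_one] at h <;>
    omega

lemma foldMapNat_surjective : Function.Surjective foldMapNat := by
  intro z
  rcases le_or_gt 0 z with hz | hz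
  · exact ⟨2 * z.toNat, by rw [foldMapNat_two_mul]; omega⟩
  · exact ⟨2 * (-z - 1).toNat + 1, by rw [foldMapNat_two_mul_add_one]; omega⟩

lemma foldMapNat_bijective : Function.Bijective foldMapNat :=
  ⟨foldMapNat_injective, foldMapNat_surjective⟩

lemma foldMapReal_of_even {t : ℝ} (h : Even ⌊t⌋) : foldMapReal t = t - ⌊t⌋ / 2 := by
  rw [foldMapReal, if_pos h]
  ring

lemma foldMapReal_of_not_even {t : ℝ} (h : ¬Even ⌊t⌋) :
    foldMapReal t = (⌊t⌋ - 1) / 2 - t := by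
  rw [foldMapReal, if_neg h]
  ring

lemma abs_foldMapReal_sub_of_even_iff {s t : ℝ} (h : Even ⌊s⌋ ↔ Even ⌊t⌋) :
    |foldMapReal t - foldMapReal s| = |t - s - ((⌊t⌋ - ⌊s⌋ : ℤ) : ℝ) / 2| := by
  by_cases hs : Even ⌊s⌋
  · rw [foldMapReal_of_even (h.mp hs), foldMapReal_of_even hs]
    congr 1
    push_cast
    ring
  · rw [foldMapReal_of_not_even (mt h.mpr hs), foldMapReal_of_not_even hs, ← abs_neg]
    congr 1
    push_cast
    ring

lemma abs_foldMapReal_sub_of_not_even_iff {s t : ℝ} (h : ¬(Even ⌊s⌋ ↔ Even ⌊t⌋)) :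
    |foldMapReal t - foldMapReal s| = |(t - ⌊t⌋ / 2) + (s - ⌊s⌋ / 2) + 1 / 2| := by
  by_cases hs : Even ⌊s⌋
  · have ht : ¬Even ⌊t⌋ := fun ht => h (iff_of_true hs ht)
    rw [foldMapReal_of_not_even ht, foldMapReal_of_even hs, ← abs_neg]
    congr 1
    ring
  · have ht : Even ⌊t⌋ := by by_contra ht; exact h (iff_of_false hs ht)
    rw [foldMapReal_of_even ht, foldMapReal_of_not_even hs]
    congr 1
    ring

lemma four_le_abs_of_even_of_ne {k : ℤ} (he : Even k) (h0 : k ≠ 0) (h2 : |k| ≠ 2) : 4 ≤ |k| := by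
  obtain ⟨j, rfl⟩ := he
  rw [abs_eq_max_neg] at h2 ⊢
  omega

lemma abs_div_four_le_abs_sub_half {d : ℝ} {k : ℤ} (he : Even k) (h2 : |k| ≠ 2)
    (hdk : |d - k| < 1) : |d| / 4 ≤ |d - k / 2| := by
  by_cases h0 : k = 0
  · simp only [h0, Int.cast_zero, zero_div, sub_zero]
    linarith [abs_nonneg d]
  have hk : (4 : ℝ) ≤ |(k : ℝ)| := by exact_mod_cast four_le_abs_of_even_of_ne he h0 h2
  obtain ⟨hdk₁, hdk₂⟩ := abs_sub_lt_iff.mp hdk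
  rcases abs_cases (k : ℝ) with ⟨hk', -⟩ | ⟨hk', -⟩ <;>
    rcases abs_cases d with ⟨hd, -⟩ | ⟨hd, -⟩ <;>
    rcases abs_cases (d - k / 2) with ⟨hhalf, hsign⟩ | ⟨hhalf, hsign⟩ <;>
    linarith

lemma abs_sub_sub_floor_sub_floor_lt_one (s t : ℝ) :
    |t - s - ((⌊t⌋ - ⌊s⌋ : ℤ) : ℝ)| < 1 := by
  rw [abs_sub_lt_iff]
  push_cast
  constructor <;> linarith [Int.floor_le s, Int.floor_le t, Int.lt_floor_add_one s,
    Int.lt_floor_add_one t]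

lemma abs_sub_div_four_le_of_nonneg {s t : ℝ} (hs : 0 ≤ s) (ht : 0 ≤ t) :
    |t - s| / 4 ≤ |(t - ⌊t⌋ / 2) + (s - ⌊s⌋ / 2) + 1 / 2| := by
  have hfs := Int.floor_le s
  have hft := Int.floor_le t
  refine le_trans ?_ (le_abs_self _)
  rcases abs_cases (t - s) with ⟨h, -⟩ | ⟨h, -⟩ <;> linarith

theorem foldMap_bijective_and_expanding :
    Function.Bijective foldMapNat ∧
      ∀ s t : ℝ, 0 ≤ s → 0 ≤ t → |⌊s⌋ - ⌊t⌋| ≠ 2 →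
        |t - s| / 4 ≤ |foldMapReal t - foldMapReal s| := by
  refine ⟨foldMapNat_bijective, fun s t hs ht h2 => ?_⟩
  by_cases hpar : Even ⌊s⌋ ↔ Even ⌊t⌋
  · rw [abs_foldMapReal_sub_of_even_iff hpar]
    exact abs_div_four_le_abs_sub_half (Int.even_sub.mpr hpar.symm)
      (by rwa [abs_sub_comm]) (abs_sub_sub_floor_sub_floor_lt_one s t)
  · rw [abs_foldMapReal_sub_of_not_even_iff hpar]
    exact abs_sub_div_four_le_of_nonneg hs ht
end

section
/- Let H be a self-adjoint operator bounded below on a Hilbert space, E = inf σ(H), P its spectral measure, and Ω a unit vector. Then lim_{T→∞} (1/T) log ⟨Ω, e^{-TH} Ω⟩ = −E provided ⟨Ω, P([E, E+ε))Ω⟩ > 0 for all ε > 0; moreover lim_{T→∞} e^{TE} ⟨Ω, e^{-TH} Ω⟩ = ⟨Ω, P({E}) Ω⟩. -/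
open MeasureTheory Real Filter Topology

/-!
Write `Z(T) = ∫ e^{-Tx} dμ = e^{-TE} h(T)` with `h(T) = ∫ e^{-T(x-E)} dμ`. Since `μ` lives on
`[E, ∞)`, the integrand of `h` is bounded by `1` and tends pointwise to the indicator of `{E}`, so
dominated convergence gives `h(T) → μ{E}`. For the logarithmic limit, `h` is squeezed between
`μ[E, E+δ) e^{-Tδ}` and the total mass, so `(1/T) log h(T)` has limit inferior at least `-δ` and
limit superior at most `0`; positivity of `μ[E, E+δ)` is what keeps the lower bound nontrivial.
-/

theorem tendsto_one_div_mul_log_nhds_zero_of_subexponential {f : ℝ → ℝ} {C : ℝ}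
    (hupper : ∀ᶠ T in atTop, f T ≤ C)
    (hlower : ∀ δ > 0, ∃ c > 0, ∀ᶠ T in atTop, c * exp (-T * δ) ≤ f T) :
    Tendsto (fun T => 1 / T * log (f T)) atTop (𝓝 0) := by
  have hlog_div (c : ℝ) : Tendsto (fun T => log c / T) atTop (𝓝 0) :=
    tendsto_const_nhds.div_atTop tendsto_id
  rw [tendsto_order]
  refine ⟨fun a ha => ?_, fun b hb => ?_⟩
  · obtain ⟨c, hc, hlow⟩ := hlower (-a / 2) (by linarith)
    filter_upwards [hlow, (hlog_div c).eventually (lt_mem_nhds (by linarith : a / 2 < 0)),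
      eventually_gt_atTop 0] with T hT hsmall hT0
    calc a < log c / T - -a / 2 := by linarith
      _ = 1 / T * log (c * exp (-T * (-a / 2))) := by
        rw [log_mul hc.ne' (exp_ne_zero _), log_exp]
        field_simp
        ring
      _ ≤ 1 / T * log (f T) := by gcongr
  · obtain ⟨c, hc, hlow⟩ := hlower 1 one_pos
    filter_upwards [hupper, hlow, (hlog_div C).eventually (gt_mem_nhds hb),
      eventually_gt_atTop 0] with T hTC hT hsmall hT0
    have hfT : 0 < f T := lt_of_lt_of_le (by positivity) hT
    calc 1 / T * log (f T) ≤ 1 / T * log C := by gcongr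
      _ = log C / T := one_div_mul_eq_div T (log C)
      _ < b := hsmall

theorem ae_le_of_measure_Iio_eq_zero {μ : Measure ℝ} {E : ℝ} (h : μ (Set.Iio E) = 0) :
    ∀ᵐ x ∂μ, E ≤ x := by
  simp only [ae_iff, not_le]
  exact h

theorem integral_exp_neg_mul_eq (μ : Measure ℝ) (E T : ℝ) :
    ∫ x, exp (-T * x) ∂μ = exp (-T * E) * ∫ x, exp (-T * (x - E)) ∂μ := by
  rw [← integral_const_mul]
  congr 1 with x
  rw [← exp_add]
  ring_nf

section ShiftedLaplace

variable {μ : Measure ℝ} {E : ℝ}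

theorem exp_neg_mul_sub_le_one {T x : ℝ} (hT : 0 ≤ T) (hx : E ≤ x) : exp (-T * (x - E)) ≤ 1 :=
  exp_le_one_iff.mpr (by nlinarith)

variable [IsFiniteMeasure μ] (hE : ∀ᵐ x ∂μ, E ≤ x)
include hE

theorem integrable_exp_neg_mul_sub {T : ℝ} (hT : 0 ≤ T) :
    Integrable (fun x => exp (-T * (x - E))) μ :=
  (integrable_const 1).mono' (by fun_prop) <| hE.mono fun x hx => by
    rw [norm_of_nonneg (exp_pos _).le]
    exact exp_neg_mul_sub_le_one hT hx

theorem integral_exp_neg_mul_sub_le {T : ℝ} (hT : 0 ≤ T) :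
    ∫ x, exp (-T * (x - E)) ∂μ ≤ μ.real Set.univ := by
  simpa using integral_mono_ae (integrable_exp_neg_mul_sub hE hT) (integrable_const 1) <|
    hE.mono fun x hx => exp_neg_mul_sub_le_one hT hx

theorem measureReal_Ico_mul_exp_le_integral (δ : ℝ) {T : ℝ} (hT : 0 ≤ T) :
    μ.real (Set.Ico E (E + δ)) * exp (-T * δ) ≤ ∫ x, exp (-T * (x - E)) ∂μ := by
  calc μ.real (Set.Ico E (E + δ)) * exp (-T * δ)
      ≤ ∫ x in Set.Ico E (E + δ), exp (-T * (x - E)) ∂μ := by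
        rw [mul_comm]
        refine setIntegral_ge_of_const_le_real measurableSet_Ico (measure_ne_top μ _)
          (fun x hx => exp_le_exp.mpr ?_) (integrable_exp_neg_mul_sub hE hT).integrableOn
        nlinarith [hx.2]
    _ ≤ ∫ x, exp (-T * (x - E)) ∂μ :=
        setIntegral_le_integral (integrable_exp_neg_mul_sub hE hT)
          (Eventually.of_forall fun x => (exp_pos _).le)

theorem tendsto_integral_exp_neg_mul_sub :
    Tendsto (fun T => ∫ x, exp (-T * (x - E)) ∂μ) atTop (𝓝 (μ.real {E})) := by
  rw [← integral_indicator_one (measurableSet_singleton E)]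
  refine tendsto_integral_filter_of_dominated_convergence (fun _ => 1)
    (Eventually.of_forall fun T => by fun_prop) ?_ (integrable_const 1) ?_
  · filter_upwards [eventually_ge_atTop 0] with T hT
    filter_upwards [hE] with x hx
    rw [norm_of_nonneg (exp_pos _).le]
    exact exp_neg_mul_sub_le_one hT hx
  · filter_upwards [hE] with x hx
    rcases hx.eq_or_lt with rfl | hlt
    · simp
    · rw [Set.indicator_of_notMem (Set.notMem_singleton_iff.mpr hlt.ne')]
      exact tendsto_exp_atBot.comp <|
        tendsto_neg_atTop_atBot.atBot_mul_const (sub_pos.mpr hlt)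

theorem tendsto_one_div_mul_log_integral_exp_neg_mul_sub
    (hpos : ∀ ε > 0, 0 < μ (Set.Ico E (E + ε))) :
    Tendsto (fun T => 1 / T * log (∫ x, exp (-T * (x - E)) ∂μ)) atTop (𝓝 0) := by
  refine tendsto_one_div_mul_log_nhds_zero_of_subexponential
    ((eventually_ge_atTop 0).mono fun T hT => integral_exp_neg_mul_sub_le hE hT)
    fun δ hδ => ⟨_, ENNReal.toReal_pos (hpos δ hδ).ne' (measure_ne_top μ _), ?_⟩
  exact (eventually_ge_atTop 0).mono fun T hT => measureReal_Ico_mul_exp_le_integral hE δ hT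

end ShiftedLaplace

/-- Spectral-theoretic limits for the partition function. Here `μ` is the spectral
measure `μ(dx) = ⟨Ω, P(dx) Ω⟩` of the self-adjoint operator `H` in the unit vector `Ω`,
so that `⟨Ω, e^{-TH} Ω⟩ = ∫ e^{-Tx} μ(dx)`, `E = inf σ(H)` means `μ((-∞,E)) = 0`, and the
hypothesis `⟨Ω, P([E,E+ε))Ω⟩ > 0` reads `μ([E,E+ε)) > 0`. -/
theorem partition_function_ground_state_limits
    (μ : Measure ℝ) [IsProbabilityMeasure μ] (E : ℝ)
    (hsupp : μ (Set.Iio E) = 0)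
    (hε : ∀ ε : ℝ, 0 < ε → 0 < μ (Set.Ico E (E + ε))) :
    Tendsto (fun T : ℝ => (1 / T) * Real.log (∫ x, Real.exp (-T * x) ∂μ))
        atTop (nhds (-E)) ∧
      Tendsto (fun T : ℝ => Real.exp (T * E) * ∫ x, Real.exp (-T * x) ∂μ)
        atTop (nhds (μ {E}).toReal) := by
  have hE := ae_le_of_measure_Iio_eq_zero hsupp
  refine ⟨?_, ?_⟩
  · have hlim := (tendsto_const_nhds (x := -E)).add
      (tendsto_one_div_mul_log_integral_exp_neg_mul_sub hE hε)
    rw [add_zero] at hlim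
    refine hlim.congr' ?_
    filter_upwards [eventually_gt_atTop 0] with T hT
    rw [integral_exp_neg_mul_eq μ E T, log_mul (exp_ne_zero _)
      (integral_exp_pos (integrable_exp_neg_mul_sub hE hT.le)).ne', log_exp]
    field_simp
  · refine (tendsto_integral_exp_neg_mul_sub hE).congr fun T => ?_
    rw [integral_exp_neg_mul_eq μ E T, ← mul_assoc, ← exp_add, neg_mul, add_neg_cancel, exp_zero,
      one_mul]
end

section
/- Let (a_T)_{T>0} be positive reals such that T ↦ a_{2T}/a_T² is monotone increasing (equivalently a_T²/a_{2T} is decreasing), a_T = e^{-TE + o(T)} for some E ∈ ℝ, and ρ̃ := lim_{T→∞} a_T²/a_{2T} > 0. Then lim inf_{T→∞} e^{TE} a_T ≥ min(1, ρ̃) > 0. -/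
open Real Filter Topology

/-!
Put `u T = T E + log a_T` and `d T = log (a_T² / a_{2T})`, so that
`u (2T) = 2 u T - d T`, `u T = o(T)` and `d T → log ρ`. Unrolling the recurrence along
`T, 2T, 4T, …` gives `u T = ∑ⱼ d (2ʲ T) / 2ʲ⁺¹` once the remainder `u (2ᵏ T) / 2ᵏ = o(1)` is
discarded, so `u T` is squeezed between the eventual bounds of `d`. Hence `e^{TE} a_T → ρ`,
and its lim inf is `ρ`.
-/

section DoublingRecurrence

variable {u d : ℝ → ℝ}

theorem eventually_const_le_of_doubling_recurrence
    (hrec : ∀ᶠ T in atTop, u (2 * T) = 2 * u T - d T)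
    (hu : Tendsto (fun T => u T / T) atTop (𝓝 0)) {m : ℝ} (hd : ∀ᶠ T in atTop, m ≤ d T) :
    ∀ᶠ T in atTop, m ≤ u T := by
  obtain ⟨T₁, hT₁⟩ := eventually_atTop.mp (hrec.and hd)
  filter_upwards [eventually_ge_atTop (max T₁ 1)] with T hT
  have hT₀ : 0 < T := one_pos.trans_le ((le_max_right _ _).trans hT)
  have hgrow : ∀ k : ℕ, T ≤ 2 ^ k * T := fun k =>
    le_mul_of_one_le_left hT₀.le (one_le_pow₀ one_le_two)
  have hdouble : ∀ k : ℕ, u (2 ^ k * T) - m ≤ 2 ^ k * (u T - m) := by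
    intro k
    induction k with
    | zero => simp
    | succ k ih =>
      obtain ⟨hrec_k, hd_k⟩ := hT₁ (2 ^ k * T) ((le_max_left _ _).trans (hT.trans (hgrow k)))
      rw [pow_succ, mul_comm _ 2, mul_assoc, hrec_k]
      linarith
  have hlim : Tendsto (fun k : ℕ => (u (2 ^ k * T) - m) / (2 ^ k * T)) atTop (𝓝 0) := by
    have hshift : Tendsto (fun S => (u S - m) / S) atTop (𝓝 0) := by
      simpa only [sub_div, sub_zero, id] using hu.sub (tendsto_const_nhds.div_atTop tendsto_id)
    exact hshift.comp ((tendsto_pow_atTop_atTop_of_one_lt one_lt_two).atTop_mul_const hT₀)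
  have hbound : ∀ k : ℕ, (u (2 ^ k * T) - m) / (2 ^ k * T) ≤ (u T - m) / T := fun k => by
    rw [div_le_div_iff₀ (by positivity) hT₀]
    linarith [mul_le_mul_of_nonneg_right (hdouble k) hT₀.le]
  have hnonneg := le_of_tendsto' hlim hbound
  rwa [le_div_iff₀ hT₀, zero_mul, sub_nonneg] at hnonneg

theorem eventually_le_const_of_doubling_recurrence
    (hrec : ∀ᶠ T in atTop, u (2 * T) = 2 * u T - d T)
    (hu : Tendsto (fun T => u T / T) atTop (𝓝 0)) {M : ℝ} (hd : ∀ᶠ T in atTop, d T ≤ M) :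
    ∀ᶠ T in atTop, u T ≤ M := by
  have hrec' : ∀ᶠ T in atTop, -u (2 * T) = 2 * -u T - -d T :=
    hrec.mono fun T h => by rw [h]; ring
  have hu' : Tendsto (fun T => -u T / T) atTop (𝓝 0) := by
    simpa only [neg_div, neg_zero] using hu.neg
  simpa only [neg_le_neg_iff] using eventually_const_le_of_doubling_recurrence (u := fun T => -u T)
    hrec' hu' (hd.mono fun T h => neg_le_neg h)

theorem tendsto_of_doubling_recurrence
    (hrec : ∀ᶠ T in atTop, u (2 * T) = 2 * u T - d T)
    (hu : Tendsto (fun T => u T / T) atTop (𝓝 0)) {ℓ : ℝ} (hd : Tendsto d atTop (𝓝 ℓ)) :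
    Tendsto u atTop (𝓝 ℓ) := by
  refine tendsto_order.2 ⟨fun m hm => ?_, fun M hM => ?_⟩
  · obtain ⟨m', hmm', hm'ℓ⟩ := exists_between hm
    have hle := eventually_const_le_of_doubling_recurrence hrec hu
      (hd.eventually (eventually_ge_nhds hm'ℓ))
    exact hle.mono fun T h => hmm'.trans_le h
  · obtain ⟨M', hℓM', hM'M⟩ := exists_between hM
    have hge := eventually_le_const_of_doubling_recurrence hrec hu
      (hd.eventually (eventually_le_nhds hℓM'))
    exact hge.mono fun T h => h.trans_lt hM'M

end DoublingRecurrence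

theorem liminf_lower_bound_from_doubling_ratio_general
    (a : ℝ → ℝ) (E : ℝ) (ρ : ℝ)
    (hapos : ∀ T : ℝ, 0 < T → 0 < a T)
    (hsubexp : Tendsto (fun T : ℝ => Real.log (a T) / T) atTop (nhds (-E)))
    (hlim : Tendsto (fun T : ℝ => (a T) ^ 2 / a (2 * T)) atTop (nhds ρ))
    (hρ : 0 < ρ) :
    0 < min 1 ρ ∧
      min 1 ρ ≤ Filter.liminf (fun T : ℝ => Real.exp (T * E) * a T) atTop := by
  set u : ℝ → ℝ := fun T => T * E + log (a T)
  have hrec : ∀ᶠ T in atTop, u (2 * T) = 2 * u T - log (a T ^ 2 / a (2 * T)) := by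
    filter_upwards [eventually_gt_atTop 0] with T hT
    rw [log_div (pow_pos (hapos T hT) 2).ne' (hapos _ (by positivity)).ne', log_pow]
    push_cast
    ring
  have hu : Tendsto (fun T => u T / T) atTop (𝓝 0) := by
    have hsum := (tendsto_const_nhds (x := E)).add hsubexp
    rw [add_neg_cancel] at hsum
    refine hsum.congr' ?_
    filter_upwards [eventually_ne_atTop 0] with T hT
    simp only [u, add_div, mul_div_cancel_left₀ E hT]
  have hd := (continuousAt_log hρ.ne').tendsto.comp hlim
  have htendsto : Tendsto (fun T => exp (T * E) * a T) atTop (𝓝 ρ) := by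
    have hexp := (tendsto_of_doubling_recurrence hrec hu hd).rexp
    rw [exp_log hρ] at hexp
    refine hexp.congr' ?_
    filter_upwards [eventually_gt_atTop 0] with T hT
    simp only [u, exp_add, exp_log (hapos T hT)]
  exact ⟨lt_min one_pos hρ, htendsto.liminf_eq ▸ min_le_right 1 ρ⟩

theorem liminf_lower_bound_from_doubling_ratio
    (a : ℝ → ℝ) (E : ℝ) (ρ : ℝ)
    (hapos : ∀ T : ℝ, 0 < T → 0 < a T)
    (hmono : ∀ S T : ℝ, 0 < S → S ≤ T → a (2 * S) / (a S) ^ 2 ≤ a (2 * T) / (a T) ^ 2)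
    (hsubexp : Tendsto (fun T : ℝ => Real.log (a T) / T) atTop (nhds (-E)))
    (hlim : Tendsto (fun T : ℝ => (a T) ^ 2 / a (2 * T)) atTop (nhds ρ))
    (hρ : 0 < ρ) :
    0 < min 1 ρ ∧
      min 1 ρ ≤ Filter.liminf (fun T : ℝ => Real.exp (T * E) * a T) atTop :=
  liminf_lower_bound_from_doubling_ratio_general a E ρ hapos hsubexp hlim hρ
end

section
/- Let g : ℝ → [0,∞) be bounded and continuous, α > 0, T > 0, and for N ∈ ℕ let Λ(T,N) = {kT/N : 0 ≤ k ≤ N}, δ = T/N. For each interval I = (a,b] ⊆ [0,T]² the sum S_N = ∑_{i,j ∈ Λ(T,N) ∩ I, i<j, |i−j|≠δ} (1 − e^{−2αδ² g(j−i)}) converges to 2α ∫_I g(t−s) 1_{s<t} ds dt as N → ∞, and max over pairs of the summand tends to 0. -/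
/-!
Sampling `F = 1_S(s, t) g(t - s)`, with `S = I ∩ {s < t}`, at the upper-right corner of the grid
cell containing a point gives a step function whose integral is exactly the Riemann sum
`δ² ∑ F(kδ, lδ)`. These step functions converge to `F` off the frontier of `S`, which is null
because `S` is convex, so dominated convergence yields the limit of the Riemann sums.
The bond sum differs from `2α` times the Riemann sum by `1 - e^{-x} = x + O(x²)`, with
`x ≤ 2αMδ²` for a bound `M` of `g`, on each of the `(N + 1)²` pairs, plus the weights of the
at most `N + 1` nearest-neighbour pairs it omits; both errors are `O(1/N)`.
-/

open MeasureTheory Real Filter Topology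

noncomputable def gridCeil (δ x : ℝ) : ℝ := ⌈x / δ⌉ * δ

def gridCell (δ : ℝ) (k : ℤ) : Set ℝ := Set.Ioc (k * δ - δ) (k * δ)

section Grid

variable {δ : ℝ}

lemma mem_gridCell_iff (hδ : 0 < δ) {k : ℤ} {x : ℝ} : x ∈ gridCell δ k ↔ ⌈x / δ⌉ = k := by
  rw [gridCell, Set.mem_Ioc, Int.ceil_eq_iff, sub_lt_iff_lt_add, lt_div_iff₀ hδ, div_le_iff₀ hδ]
  constructor <;> rintro ⟨h₁, h₂⟩ <;> constructor <;> linarith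

lemma le_gridCeil (hδ : 0 < δ) (x : ℝ) : x ≤ gridCeil δ x :=
  (div_le_iff₀ hδ).1 (Int.le_ceil _)

lemma gridCeil_lt (hδ : 0 < δ) (x : ℝ) : gridCeil δ x < x + δ := by
  calc gridCeil δ x < (x / δ + 1) * δ := mul_lt_mul_of_pos_right (Int.ceil_lt_add_one _) hδ
    _ = x + δ := by field_simp

lemma mem_Icc_of_gridCeil_mem_Icc (hδ : 0 < δ) {T x : ℝ} (hδT : δ ≤ T)
    (hx : gridCeil δ x ∈ Set.Icc 0 T) : x ∈ Set.Icc (-T) T :=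
  ⟨by linarith [gridCeil_lt hδ x, hx.1], (le_gridCeil hδ x).trans hx.2⟩

lemma tendsto_gridCeil {ι : Type*} {l : Filter ι} {δ : ι → ℝ} (hpos : ∀ᶠ i in l, 0 < δ i)
    (hlim : Tendsto δ l (𝓝 0)) (x : ℝ) : Tendsto (fun i => gridCeil (δ i) x) l (𝓝 x) :=
  tendsto_of_tendsto_of_tendsto_of_le_of_le' tendsto_const_nhds
    (by simpa using tendsto_const_nhds.add hlim) (hpos.mono fun _ h => le_gridCeil h x)
    (hpos.mono fun _ h => (gridCeil_lt h x).le)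

lemma comp_gridCeil_eq_sum_indicator {β : Type*} [AddCommMonoid β] (hδ : 0 < δ) (N : ℕ)
    {u : ℝ → β} (hu : Function.support u ⊆ Set.Icc 0 (N * δ)) (x : ℝ) :
    u (gridCeil δ x) =
      ∑ k ∈ Finset.range (N + 1), (gridCell δ k).indicator (fun _ => u (k * δ)) x := by
  classical
  simp only [Set.indicator_apply, mem_gridCell_iff hδ]
  by_cases hx : ∃ n ∈ Finset.range (N + 1), ⌈x / δ⌉ = n
  · obtain ⟨n, hn, hxn⟩ := hx
    rw [Finset.sum_eq_single_of_mem n hn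
        fun k _ hkn => if_neg (by rw [hxn]; exact_mod_cast hkn.symm),
      if_pos hxn, gridCeil, hxn, Int.cast_natCast]
  · push Not at hx
    rw [Finset.sum_eq_zero fun k hk => if_neg (hx k hk)]
    refine Function.notMem_support.1 fun hmem => ?_
    obtain ⟨h₀, hN⟩ := hu hmem
    have hceil₀ : 0 ≤ ⌈x / δ⌉ := by exact_mod_cast nonneg_of_mul_nonneg_left h₀ hδ
    have hceilN : ⌈x / δ⌉ ≤ N := by exact_mod_cast le_of_mul_le_mul_right hN hδ
    refine hx ⌈x / δ⌉.toNat (Finset.mem_range_succ_iff.2 (by omega)) ?_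
    exact (Int.toNat_of_nonneg hceil₀).symm

lemma comp_gridCeil_prod_eq_sum_indicator {β : Type*} [AddCommMonoid β] (hδ : 0 < δ) (N : ℕ)
    {F : ℝ × ℝ → β} (hF : Function.support F ⊆ Set.Icc 0 (N * δ) ×ˢ Set.Icc 0 (N * δ))
    (p : ℝ × ℝ) :
    F (gridCeil δ p.1, gridCeil δ p.2) =
      ∑ k ∈ Finset.range (N + 1), ∑ l ∈ Finset.range (N + 1),
        (gridCell δ k ×ˢ gridCell δ l).indicator (fun _ => F (k * δ, l * δ)) p := by
  classical
  rw [comp_gridCeil_eq_sum_indicator hδ N (u := fun s => F (s, gridCeil δ p.2))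
    (fun s hs => (hF hs).1)]
  refine Finset.sum_congr rfl fun k _ => ?_
  rw [comp_gridCeil_eq_sum_indicator hδ N (u := fun t => F (k * δ, t)) (fun t ht => (hF ht).2)]
  by_cases hk : p.1 ∈ gridCell δ k <;> simp [Set.indicator_apply, hk]

end Grid

lemma ae_continuousAt_indicator_of_convex {E F : Type*} [NormedAddCommGroup E] [NormedSpace ℝ E]
    [MeasurableSpace E] [BorelSpace E] [FiniteDimensional ℝ E] [TopologicalSpace F] [Zero F]
    (μ : Measure E) [μ.IsAddHaarMeasure] {s : Set E} (hs : Convex ℝ s) {f : E → F}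
    (hf : Continuous f) : ∀ᵐ x ∂μ, ContinuousAt (s.indicator f) x :=
  (measure_eq_zero_iff_ae_notMem.1 (hs.addHaar_frontier μ)).mono fun _ hx =>
    hf.continuousOn.continuousAt_indicator hx

lemma convex_setOf_fst_lt_snd : Convex ℝ {q : ℝ × ℝ | q.1 < q.2} := by
  intro p hp q hq a b ha hb hab
  simp only [Set.mem_ofPred_eq, Prod.fst_add, Prod.snd_add, Prod.smul_fst, Prod.smul_snd,
    smul_eq_mul] at hp hq ⊢
  rcases ha.eq_or_lt with rfl | ha
  · rw [zero_add] at hab; subst hab; linarith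
  · nlinarith

section Riemann

variable {E : Type*} [NormedAddCommGroup E] {δ : ℝ}

lemma measurableSet_gridCell (δ : ℝ) (k : ℤ) : MeasurableSet (gridCell δ k) := measurableSet_Ioc

lemma volume_real_gridCell (hδ : 0 ≤ δ) (k : ℤ) : volume.real (gridCell δ k) = δ := by
  rw [gridCell, Real.volume_real_Ioc_of_le (by linarith)]
  ring

lemma integrable_indicator_gridCell_prod (k l : ℤ) (c : E) :
    Integrable ((gridCell δ k ×ˢ gridCell δ l).indicator fun _ => c) := by
  refine (integrable_indicator_iff
    ((measurableSet_gridCell δ k).prod (measurableSet_gridCell δ l))).2 ?_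
  exact integrableOn_const
    ((Metric.isBounded_Ioc _ _).prod (Metric.isBounded_Ioc _ _)).measure_lt_top.ne

lemma integrable_comp_gridCeil_prod (hδ : 0 < δ) (N : ℕ) {F : ℝ × ℝ → E}
    (hF : Function.support F ⊆ Set.Icc 0 (N * δ) ×ˢ Set.Icc 0 (N * δ)) :
    Integrable fun p : ℝ × ℝ => F (gridCeil δ p.1, gridCeil δ p.2) := by
  simp_rw [comp_gridCeil_prod_eq_sum_indicator hδ N hF]
  exact integrable_finsetSum _ fun k _ => integrable_finsetSum _ fun l _ =>
    integrable_indicator_gridCell_prod k l _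

variable [NormedSpace ℝ E] [CompleteSpace E]

lemma integral_comp_gridCeil_prod (hδ : 0 < δ) (N : ℕ) {F : ℝ × ℝ → E}
    (hF : Function.support F ⊆ Set.Icc 0 (N * δ) ×ˢ Set.Icc 0 (N * δ)) :
    ∫ p : ℝ × ℝ, F (gridCeil δ p.1, gridCeil δ p.2) =
      δ ^ 2 • ∑ k ∈ Finset.range (N + 1), ∑ l ∈ Finset.range (N + 1), F (k * δ, l * δ) := by
  simp_rw [comp_gridCeil_prod_eq_sum_indicator hδ N hF]
  rw [integral_finsetSum, Finset.smul_sum]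
  · refine Finset.sum_congr rfl fun k _ => ?_
    rw [integral_finsetSum, Finset.smul_sum]
    · refine Finset.sum_congr rfl fun l _ => ?_
      rw [integral_indicator_const _
          ((measurableSet_gridCell δ k).prod (measurableSet_gridCell δ l)),
        Measure.volume_eq_prod, measureReal_prod_prod, volume_real_gridCell hδ.le,
        volume_real_gridCell hδ.le, sq]
    · exact fun l _ => integrable_indicator_gridCell_prod k l _
  · exact fun k _ => integrable_finsetSum _ fun l _ => integrable_indicator_gridCell_prod k l _

theorem tendsto_gridRiemannSum {F : ℝ × ℝ → E} {T M : ℝ} (hT : 0 < T) (hFM : ∀ p, ‖F p‖ ≤ M)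
    (hF : Function.support F ⊆ Set.Icc 0 T ×ˢ Set.Icc 0 T) (hFc : ∀ᵐ p, ContinuousAt F p) :
    Tendsto (fun N : ℕ => (T / N) ^ 2 •
        ∑ k ∈ Finset.range (N + 1), ∑ l ∈ Finset.range (N + 1), F (k * (T / N), l * (T / N)))
      atTop (𝓝 (∫ p, F p)) := by
  have hδ : ∀ᶠ N : ℕ in atTop, 0 < T / N ∧ T / N ≤ T ∧ (N : ℝ) * (T / N) = T := by
    filter_upwards [eventually_ge_atTop 1] with N hN
    have hN' : (1 : ℝ) ≤ N := by exact_mod_cast hN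
    exact ⟨by positivity, div_le_self hT.le hN', mul_div_cancel₀ T (by positivity)⟩
  have hlim : Tendsto (fun N : ℕ => T / N) atTop (𝓝 0) := tendsto_const_div_atTop_nhds_zero_nat T
  set B : Set (ℝ × ℝ) := Set.Icc (-T) T ×ˢ Set.Icc (-T) T
  have hdom := tendsto_integral_filter_of_dominated_convergence (B.indicator fun _ => M)
    (F := fun (N : ℕ) (p : ℝ × ℝ) => F (gridCeil (T / N) p.1, gridCeil (T / N) p.2)) (f := F)
    (hδ.mono fun N ⟨hpos, _, hNT⟩ =>
      (integrable_comp_gridCeil_prod hpos N (hNT.symm ▸ hF)).aestronglyMeasurable)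
    (hδ.mono fun N ⟨hpos, hle, _⟩ => ae_of_all _ fun p => ?_)
    ((integrable_indicator_iff (measurableSet_Icc.prod measurableSet_Icc)).2
      (integrableOn_const (isCompact_Icc.prod isCompact_Icc).measure_lt_top.ne))
    (hFc.mono fun p hp => hp.tendsto.comp <|
      (tendsto_gridCeil (hδ.mono fun _ h => h.1) hlim p.1).prodMk_nhds
        (tendsto_gridCeil (hδ.mono fun _ h => h.1) hlim p.2))
  · refine hdom.congr' (hδ.mono fun N ⟨hpos, _, hNT⟩ => ?_)
    exact integral_comp_gridCeil_prod hpos N (hNT.symm ▸ hF)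
  · by_cases hp : p ∈ B
    · simpa [Set.indicator_of_mem hp] using hFM _
    · have hout : (gridCeil (T / N) p.1, gridCeil (T / N) p.2) ∉ Function.support F :=
        fun hmem => hp ⟨mem_Icc_of_gridCeil_mem_Icc hpos hle (hF hmem).1,
          mem_Icc_of_gridCeil_mem_Icc hpos hle (hF hmem).2⟩
      simp [Set.indicator_of_notMem hp, Function.notMem_support.1 hout]

theorem tendsto_gridRiemannSum_indicator_of_convex {s : Set (ℝ × ℝ)} {f : ℝ × ℝ → E} {T M : ℝ}
    (hT : 0 < T) (hs : Convex ℝ s) (hsT : s ⊆ Set.Icc 0 T ×ˢ Set.Icc 0 T) (hf : Continuous f)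
    (hfM : ∀ p, ‖f p‖ ≤ M) :
    Tendsto (fun N : ℕ => (T / N) ^ 2 • ∑ k ∈ Finset.range (N + 1), ∑ l ∈ Finset.range (N + 1),
        s.indicator f (k * (T / N), l * (T / N)))
      atTop (𝓝 (∫ p in s, f p)) := by
  rw [← integral_indicator₀ (hs.nullMeasurableSet volume)]
  exact tendsto_gridRiemannSum hT (fun p => (norm_indicator_le_norm_self f p).trans (hfM p))
    (Set.support_indicator_subset.trans hsT) (ae_continuousAt_indicator_of_convex volume hs hf)

end Riemann

lemma abs_one_sub_exp_neg_sub_self_le {x : ℝ} (hx₀ : 0 ≤ x) (hx₁ : x ≤ 1) :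
    |1 - exp (-x) - x| ≤ x ^ 2 := by
  have h := abs_exp_sub_one_sub_id_le (x := -x) (by rwa [abs_neg, abs_of_nonneg hx₀])
  rw [neg_sq] at h
  rwa [← abs_neg, show -(1 - exp (-x) - x) = exp (-x) - 1 - -x by ring]

lemma one_sub_exp_neg_mem_Icc {x : ℝ} (hx : 0 ≤ x) : 1 - exp (-x) ∈ Set.Icc 0 x :=
  ⟨by linarith [exp_le_one_iff.2 (neg_nonpos.2 hx)], by linarith [add_one_le_exp (-x)]⟩

lemma abs_ite_one_sub_exp_neg_sub_ite_le {P Q : Prop} [Decidable P] [Decidable Q] {x ε : ℝ}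
    (hx₀ : 0 ≤ x) (hxε : x ≤ ε) (hε : ε ≤ 1) :
    |(if P ∧ ¬Q then 1 - exp (-x) else 0) - (if P then x else 0)| ≤
      ε ^ 2 + if Q then ε else 0 := by
  have hε₀ : 0 ≤ ε := hx₀.trans hxε
  by_cases hP : P <;> by_cases hQ : Q <;> simp only [hP, hQ, and_true, and_false, not_true,
    not_false_eq_true, if_true, if_false, zero_sub, abs_neg, sub_self, abs_zero, add_zero]
  · rw [abs_of_nonneg hx₀]; nlinarith
  · calc |1 - exp (-x) - x| ≤ x ^ 2 := abs_one_sub_exp_neg_sub_self_le hx₀ (hxε.trans hε)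
      _ ≤ ε ^ 2 := pow_le_pow_left₀ hx₀ hxε 2
  · positivity
  · positivity

lemma abs_sum_one_sub_exp_neg_sub_sum_le (N : ℕ) {P Q : ℕ → ℕ → Prop}
    [∀ k l, Decidable (P k l)] [∀ k l, Decidable (Q k l)] {x : ℕ → ℕ → ℝ} {ε : ℝ}
    (hx : ∀ k l, 0 ≤ x k l ∧ x k l ≤ ε) (hε : ε ≤ 1) (hQ : ∀ k l, Q k l → l = k + 1) :
    |∑ k ∈ Finset.range (N + 1), ∑ l ∈ Finset.range (N + 1),
        (if P k l ∧ ¬Q k l then 1 - exp (-x k l) else 0) -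
      ∑ k ∈ Finset.range (N + 1), ∑ l ∈ Finset.range (N + 1), (if P k l then x k l else 0)| ≤
      ((N + 1) * ε) ^ 2 + (N + 1) * ε := by
  have hε₀ : 0 ≤ ε := (hx 0 0).1.trans (hx 0 0).2
  have hterm : ∀ k l, |(if P k l ∧ ¬Q k l then 1 - exp (-x k l) else 0) -
      (if P k l then x k l else 0)| ≤ ε ^ 2 + if l = k + 1 then ε else 0 := fun k l =>
    (abs_ite_one_sub_exp_neg_sub_ite_le (hx k l).1 (hx k l).2 hε).trans <| add_le_add le_rfl
      (by split_ifs with hq hl <;> first | rfl | exact absurd (hQ k l hq) hl | exact hε₀)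
  have hrow : ∀ k, ∑ l ∈ Finset.range (N + 1), (if l = k + 1 then ε else 0) ≤ ε := fun k => by
    rw [Finset.sum_ite_eq']; split_ifs <;> simp [hε₀]
  rw [← Finset.sum_sub_distrib]
  refine (Finset.abs_sum_le_sum_abs _ _).trans ?_
  calc _ ≤ ∑ k ∈ Finset.range (N + 1), ∑ l ∈ Finset.range (N + 1),
        (ε ^ 2 + if l = k + 1 then ε else 0) := Finset.sum_le_sum fun k _ => by
          rw [← Finset.sum_sub_distrib]
          exact (Finset.abs_sum_le_sum_abs _ _).trans (Finset.sum_le_sum fun l _ => hterm k l)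
    _ ≤ ∑ k ∈ Finset.range (N + 1), ((N + 1) * ε ^ 2 + ε) := Finset.sum_le_sum fun k _ => by
          rw [Finset.sum_add_distrib, Finset.sum_const, Finset.card_range, nsmul_eq_mul]
          push_cast
          linarith [hrow k]
    _ = ((N + 1) * ε) ^ 2 + (N + 1) * ε := by
          rw [Finset.sum_const, Finset.card_range, nsmul_eq_mul]
          push_cast
          ring

lemma tendsto_iSup_iSup_one_sub_exp_neg {ι κ : ℕ → Type*} {x : ∀ N, ι N → κ N → ℝ} {ε : ℕ → ℝ}
    (hx : ∀ N i j, 0 ≤ x N i j ∧ x N i j ≤ ε N) (hε₀ : ∀ N, 0 ≤ ε N)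
    (hε : Tendsto ε atTop (𝓝 0)) :
    Tendsto (fun N => ⨆ i, ⨆ j, 1 - exp (-x N i j)) atTop (𝓝 0) :=
  squeeze_zero
    (fun N => Real.iSup_nonneg fun i => Real.iSup_nonneg fun j =>
      (one_sub_exp_neg_mem_Icc (hx N i j).1).1)
    (fun N => Real.iSup_le (fun i => Real.iSup_le (fun j =>
      (one_sub_exp_neg_mem_Icc (hx N i j).1).2.trans (hx N i j).2) (hε₀ N)) (hε₀ N)) hε

lemma eq_add_one_of_mul_sub_mul_eq {δ : ℝ} (hδ : δ ≠ 0) {k l : ℕ} (h : l * δ - k * δ = δ) :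
    l = k + 1 := by
  have hkl : ((l : ℝ) - k - 1) * δ = 0 := by linear_combination h
  have : (l : ℝ) = k + 1 := by linarith [(mul_eq_zero.1 hkl).resolve_right hδ]
  exact_mod_cast this

lemma tendsto_natCast_add_one_mul_div_sq (c T : ℝ) :
    Tendsto (fun N : ℕ => ((N : ℝ) + 1) * (c * (T / N) ^ 2)) atTop (𝓝 0) := by
  have hδ := tendsto_const_div_atTop_nhds_zero_nat T
  have h := ((tendsto_const_nhds (x := T)).add hδ).mul hδ |>.const_mul c
  rw [add_zero, mul_zero, mul_zero] at h
  refine h.congr' ((eventually_ne_atTop 0).mono fun N hN => ?_)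
  field_simp

/-- Riemann-sum convergence of discrete long-range percolation bond probabilities to the
intensity of the continuum Poisson bond process. -/
theorem discrete_bond_sum_convergence
    (g : ℝ → ℝ) (hgcont : Continuous g) (hgbdd : ∃ M : ℝ, ∀ t, |g t| ≤ M)
    (hgnonneg : ∀ t, 0 ≤ g t)
    (α T : ℝ) (hα : 0 < α) (hT : 0 < T)
    (a b : ℝ × ℝ)
    (hI : Set.Ioc a.1 b.1 ×ˢ Set.Ioc a.2 b.2 ⊆ Set.Icc (0 : ℝ) T ×ˢ Set.Icc (0 : ℝ) T) :
    Tendsto (fun N : ℕ =>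
        ∑ k ∈ Finset.range (N + 1), ∑ l ∈ Finset.range (N + 1),
          if ((k : ℝ) * T / N, (l : ℝ) * T / N) ∈ Set.Ioc a.1 b.1 ×ˢ Set.Ioc a.2 b.2 ∧
              (k : ℝ) * T / N < (l : ℝ) * T / N ∧
              (l : ℝ) * T / N - (k : ℝ) * T / N ≠ T / N
          then 1 - Real.exp (-(2 * α * (T / N) ^ 2 * g ((l : ℝ) * T / N - (k : ℝ) * T / N)))
          else 0)
      atTop
      (nhds (2 * α * ∫ p in Set.Ioc a.1 b.1 ×ˢ Set.Ioc a.2 b.2,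
        Set.indicator {q : ℝ × ℝ | q.1 < q.2} (fun q => g (q.2 - q.1)) p)) ∧
    Tendsto (fun N : ℕ =>
        ⨆ k : Fin (N + 1), ⨆ l : Fin (N + 1),
          (1 - Real.exp (-(2 * α * (T / N) ^ 2 * g ((l : ℝ) * T / N - (k : ℝ) * T / N)))))
      atTop (nhds 0) := by
  obtain ⟨M, hM⟩ := hgbdd
  have hweight (N : ℕ) (t : ℝ) :
      0 ≤ 2 * α * (T / N) ^ 2 * g t ∧ 2 * α * (T / N) ^ 2 * g t ≤ 2 * α * M * (T / N) ^ 2 :=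
    ⟨by have := hgnonneg t; positivity, by
      rw [mul_right_comm _ M]
      exact mul_le_mul_of_nonneg_left ((le_abs_self _).trans (hM t)) (by positivity)⟩
  have hε : Tendsto (fun N : ℕ => 2 * α * M * (T / N) ^ 2) atTop (𝓝 0) := by
    simpa using ((tendsto_const_div_atTop_nhds_zero_nat T).pow 2).const_mul (2 * α * M)
  have hn := tendsto_natCast_add_one_mul_div_sq (2 * α * M) T
  refine ⟨?_, tendsto_iSup_iSup_one_sub_exp_neg (fun N k l => hweight N _)
    (fun N => (hweight N 0).1.trans (hweight N 0).2) hε⟩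
  have hRiemann := (tendsto_gridRiemannSum_indicator_of_convex hT
    (((convex_Ioc _ _).prod (convex_Ioc _ _)).inter convex_setOf_fst_lt_snd)
    (Set.inter_subset_left.trans hI) (hgcont.comp (continuous_snd.sub continuous_fst))
    (fun q => hM _)).const_mul (2 * α)
  simp only [Set.indicator_apply, Set.mem_inter_iff, Set.mem_ofPred_eq, smul_eq_mul,
    Finset.mul_sum, mul_ite, mul_zero, ← mul_assoc] at hRiemann
  rw [setIntegral_indicator (measurableSet_lt measurable_fst measurable_snd)]
  refine tendsto_of_tendsto_of_dist hRiemann (squeeze_zero' (Eventually.of_forall fun _ =>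
    dist_nonneg) ?_ (by simpa using (hn.pow 2).add hn))
  filter_upwards [eventually_ne_atTop 0, hε.eventually_le_const one_pos] with N hN hε₁
  simp only [mul_div_assoc, ne_eq, ← and_assoc]
  rw [dist_comm, Real.dist_eq]
  exact abs_sum_one_sub_exp_neg_sub_sum_le N (fun k l => hweight N _) hε₁
    (fun k l => eq_add_one_of_mul_sub_mul_eq (by positivity))
end
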